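/- arXiv:math/0011238 — 3 statements merged into one kernel-verified Lean document; each statement's English description precedes it below -/
import Mathlib

section
/- For every positive integer n there is a function φ : [0,∞) → [0,∞) with the following property. Let Λ = (l_{ij}) and Λ' = (l'_{ij}) be n×n real lower-triangular matrices with 1's on the diagonal such that every nonzero off-diagonal entry of Λ or Λ' lies on the subdiagonal (i.e. if l_{ij} ≠ 0 or l'_{ij} ≠ 0 then i = j or i = j+1), and such that l_{j+1,j}·l'_{j+1,j} = 0 for all j. Let U and U' be n×n real upper-triangular matrices with 1's on the diagonal, and let R ≥ 0. If some entry of Λ or of Λ' has absolute value greater than φ(R), then some entry of the matrix S = (UΛ)⁻¹(U'Λ') has absolute value greater than R. -/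
/-!
Put `S = (UΛ)⁻¹(U'Λ')`. Since `U⁻¹U'` is unit upper triangular and `Λ, Λ'` are unit lower
bidiagonal, comparing the subdiagonal entries of `ΛS = (U⁻¹U')Λ'` gives
`S_{j+1,j} + Λ_{j+1,j} S_{jj} = Λ'_{j+1,j}`, and symmetrically for `S⁻¹ = (U'Λ')⁻¹(UΛ)`.
As `Λ_{j+1,j} Λ'_{j+1,j} = 0`, every subdiagonal entry of `Λ'` is an entry of `S` and every
subdiagonal entry of `Λ` is an entry of `S⁻¹`. Since `det S = 1`, `S⁻¹` is the adjugate of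
`S`, whose entries are bounded by `n! · max(R, 1)ⁿ` once the entries of `S` are bounded by `R`.
-/

open Matrix

namespace Matrix

section UnitUpperTriangular

variable {ι R : Type*} [Fintype ι] [LinearOrder ι] [CommRing R]

theorem IsUpperTriangular.mul_apply_eq_of_forall_lt {M N : Matrix ι ι R}
    (hM : M.IsUpperTriangular) {i j : ι} (hN : ∀ k, i < k → N k j = 0) :
    (M * N) i j = M i i * N i j := by
  rw [mul_apply]
  refine Finset.sum_eq_single i (fun k _ hk => ?_) (by simp)
  rcases hk.lt_or_gt with hk | hk
  · rw [hM hk, zero_mul]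
  · rw [hN k hk, mul_zero]

def IsUnitUpperTriangular (U : Matrix ι ι R) : Prop :=
  U.IsUpperTriangular ∧ ∀ i, U i i = 1

namespace IsUnitUpperTriangular

variable {U V : Matrix ι ι R}

theorem mul (hU : U.IsUnitUpperTriangular) (hV : V.IsUnitUpperTriangular) :
    (U * V).IsUnitUpperTriangular :=
  ⟨hU.1.mul hV.1, fun i => by
    rw [hU.1.mul_apply_eq_of_forall_lt (i := i) fun k hk => hV.1 hk, hU.2, hV.2,
      one_mul]⟩

variable [DecidableEq ι]

theorem det_eq_one (hU : U.IsUnitUpperTriangular) : U.det = 1 := by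
  simp [det_of_isUpperTriangular hU.1, hU.2]

theorem inv (hU : U.IsUnitUpperTriangular) : U⁻¹.IsUnitUpperTriangular := by
  have hdet : IsUnit U.det := hU.det_eq_one ▸ isUnit_one
  have : Invertible U := invertibleOfIsUnitDet U hdet
  have hUinv : U⁻¹.IsUpperTriangular := blockTriangular_inv_of_blockTriangular hU.1
  refine ⟨hUinv, fun i => ?_⟩
  have h := congr_fun₂ (nonsing_inv_mul U hdet) i i
  rwa [hUinv.mul_apply_eq_of_forall_lt (i := i) fun k hk => hU.1 hk, hU.2, mul_one,
    one_apply_eq] at h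

end IsUnitUpperTriangular

end UnitUpperTriangular

section UnitLowerBidiagonal

variable {n : ℕ} {R : Type*} [CommRing R]

def IsUnitLowerBidiagonal (Λ : Matrix (Fin n) (Fin n) R) : Prop :=
  (∀ i, Λ i i = 1) ∧ ∀ i j, i ≠ j → Λ i j ≠ 0 → (i : ℕ) = j + 1

namespace IsUnitLowerBidiagonal

variable {Λ : Matrix (Fin n) (Fin n) R}

theorem apply_eq_zero (hΛ : Λ.IsUnitLowerBidiagonal) {i j : Fin n} (hij : i ≠ j)
    (hsub : (i : ℕ) ≠ j + 1) : Λ i j = 0 :=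
  not_not.1 fun h => hsub (hΛ.2 i j hij h)

theorem det_eq_one (hΛ : Λ.IsUnitLowerBidiagonal) : Λ.det = 1 := by
  have hlow : Λ.IsLowerTriangular := fun i j hij =>
    hΛ.apply_eq_zero (ne_of_lt hij) (by have : (i : ℕ) < j := hij; omega)
  simp [det_of_isLowerTriangular Λ hlow, hΛ.1]

theorem mul_apply_of_subdiag (hΛ : Λ.IsUnitLowerBidiagonal) (A : Matrix (Fin n) (Fin n) R)
    {i j : Fin n} (hij : (i : ℕ) = j + 1) (k : Fin n) :
    (Λ * A) i k = A i k + Λ i j * A j k := by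
  have hne : i ≠ j := fun h => by simp [h] at hij
  rw [mul_apply, Fintype.sum_eq_add i j hne fun l hl => ?_, hΛ.1, one_mul]
  rw [hΛ.apply_eq_zero (Ne.symm hl.1) fun h => hl.2 (Fin.ext (by omega)), zero_mul]

end IsUnitLowerBidiagonal

variable {Λ Λ' U U' : Matrix (Fin n) (Fin n) R}

theorem IsUnitUpperTriangular.det_mul_of_isUnitLowerBidiagonal (hU : U.IsUnitUpperTriangular)
    (hΛ : Λ.IsUnitLowerBidiagonal) : (U * Λ).det = 1 := by
  rw [det_mul, hU.det_eq_one, hΛ.det_eq_one, one_mul]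

theorem det_inv_mul_mul_eq_one (hU : U.IsUnitUpperTriangular) (hU' : U'.IsUnitUpperTriangular)
    (hΛ : Λ.IsUnitLowerBidiagonal) (hΛ' : Λ'.IsUnitLowerBidiagonal) :
    ((U * Λ)⁻¹ * (U' * Λ')).det = 1 := by
  rw [det_mul, det_nonsing_inv, hU.det_mul_of_isUnitLowerBidiagonal hΛ,
    hU'.det_mul_of_isUnitLowerBidiagonal hΛ', Ring.inverse_one, one_mul]

theorem inv_mul_mul_apply_add_of_subdiag (hU : U.IsUnitUpperTriangular)
    (hU' : U'.IsUnitUpperTriangular) (hΛ : Λ.IsUnitLowerBidiagonal)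
    (hΛ' : Λ'.IsUnitLowerBidiagonal) {i j : Fin n} (hij : (i : ℕ) = j + 1) :
    ((U * Λ)⁻¹ * (U' * Λ')) i j + Λ i j * ((U * Λ)⁻¹ * (U' * Λ')) j j = Λ' i j := by
  have hV := hU.inv.mul hU'
  have hΛS : Λ * ((U * Λ)⁻¹ * (U' * Λ')) = (U⁻¹ * U') * Λ' := by
    rw [mul_inv_rev, Matrix.mul_assoc,
      mul_nonsing_inv_cancel_left _ _ (hΛ.det_eq_one ▸ isUnit_one), Matrix.mul_assoc]
  have hentry := congr_fun₂ hΛS i j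
  rwa [hΛ.mul_apply_of_subdiag _ hij, hV.1.mul_apply_eq_of_forall_lt fun k hk =>
    hΛ'.apply_eq_zero (fun h => by simp [h] at hk; omega) (by omega), hV.2, one_mul] at hentry

theorem inv_mul_mul_apply_of_subdiag_of_apply_eq_zero (hU : U.IsUnitUpperTriangular)
    (hU' : U'.IsUnitUpperTriangular) (hΛ : Λ.IsUnitLowerBidiagonal)
    (hΛ' : Λ'.IsUnitLowerBidiagonal) {i j : Fin n} (hij : (i : ℕ) = j + 1) (h : Λ i j = 0) :
    ((U * Λ)⁻¹ * (U' * Λ')) i j = Λ' i j := by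
  simpa [h] using inv_mul_mul_apply_add_of_subdiag hU hU' hΛ hΛ' hij

theorem inv_inv_mul_mul_apply_of_subdiag_of_apply_eq_zero (hU : U.IsUnitUpperTriangular)
    (hU' : U'.IsUnitUpperTriangular) (hΛ : Λ.IsUnitLowerBidiagonal)
    (hΛ' : Λ'.IsUnitLowerBidiagonal) {i j : Fin n} (hij : (i : ℕ) = j + 1) (h : Λ' i j = 0) :
    ((U * Λ)⁻¹ * (U' * Λ'))⁻¹ i j = Λ i j := by
  rw [mul_inv_rev, nonsing_inv_nonsing_inv _
    (hU.det_mul_of_isUnitLowerBidiagonal hΛ ▸ isUnit_one)]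
  exact inv_mul_mul_apply_of_subdiag_of_apply_eq_zero hU' hU hΛ' hΛ hij h

end UnitLowerBidiagonal

section Bounds

variable {ι R : Type*} [Fintype ι] [DecidableEq ι] [CommRing R] [LinearOrder R]
  [IsStrictOrderedRing R]

theorem abs_adjugate_apply_le {A : Matrix ι ι R} {C : R} (hC : 1 ≤ C)
    (hA : ∀ i j, |A i j| ≤ C) (i j : ι) :
    |A.adjugate i j| ≤ (Fintype.card ι).factorial * C ^ Fintype.card ι := by
  rw [adjugate_apply, ← nsmul_eq_mul]
  refine det_le (abv := AbsoluteValue.abs) fun k l => ?_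
  rw [AbsoluteValue.abs_apply, updateRow_apply]
  split_ifs
  · rw [Pi.single_apply]
    split_ifs <;> simp [hC, zero_le_one.trans hC]
  · exact hA k l

theorem abs_inv_apply_le_of_det_eq_one {A : Matrix ι ι R} (hdet : A.det = 1) {C : R}
    (hC : 1 ≤ C) (hA : ∀ i j, |A i j| ≤ C) (i j : ι) :
    |A⁻¹ i j| ≤ (Fintype.card ι).factorial * C ^ Fintype.card ι := by
  rw [inv_def, hdet, Ring.inverse_one, one_smul]
  exact abs_adjugate_apply_le hC hA i j

theorem IsUnitLowerBidiagonal.abs_apply_le {n : ℕ} {Λ : Matrix (Fin n) (Fin n) R}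
    (hΛ : Λ.IsUnitLowerBidiagonal) {C : R} (hC : 1 ≤ C)
    (hsub : ∀ i j : Fin n, (i : ℕ) = j + 1 → |Λ i j| ≤ C) (i j : Fin n) :
    |Λ i j| ≤ C := by
  by_cases hij : i = j
  · rwa [hij, hΛ.1, abs_one]
  by_cases hs : (i : ℕ) = j + 1
  · exact hsub i j hs
  · rw [hΛ.apply_eq_zero hij hs, abs_zero]
    exact zero_le_one.trans hC

end Bounds

end Matrix

theorem subdiagonal_divergence_general (n : ℕ) :
    ∃ φ : ℝ → ℝ, (∀ x : ℝ, 0 ≤ x → 0 ≤ φ x) ∧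
      ∀ (Λ Λ' U U' : Matrix (Fin n) (Fin n) ℝ) (R : ℝ), 0 ≤ R →
        (∀ i, Λ i i = 1) → (∀ i, Λ' i i = 1) →
        (∀ i j : Fin n, i ≠ j → (Λ i j ≠ 0 ∨ Λ' i j ≠ 0) → (i : ℕ) = (j : ℕ) + 1) →
        (∀ i j : Fin n, (i : ℕ) = (j : ℕ) + 1 → Λ i j * Λ' i j = 0) →
        (∀ i, U i i = 1) → (∀ i j : Fin n, j < i → U i j = 0) →
        (∀ i, U' i i = 1) → (∀ i j : Fin n, j < i → U' i j = 0) →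
        (∃ i j : Fin n, φ R < |Λ i j| ∨ φ R < |Λ' i j|) →
        ∃ i j : Fin n, R < |((U * Λ)⁻¹ * (U' * Λ')) i j| := by
  refine ⟨fun R => n.factorial * max R 1 ^ n, fun _ _ => by positivity, ?_⟩
  rintro Λ Λ' U U' R - hΛd hΛ'd hsub hprod hUd hUu hU'd hU'u ⟨i₀, j₀, hbig⟩
  have hΛ : Λ.IsUnitLowerBidiagonal := ⟨hΛd, fun i j h h' => hsub i j h (.inl h')⟩
  have hΛ' : Λ'.IsUnitLowerBidiagonal := ⟨hΛ'd, fun i j h h' => hsub i j h (.inr h')⟩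
  have hU : U.IsUnitUpperTriangular := ⟨fun i j h => hUu i j h, hUd⟩
  have hU' : U'.IsUnitUpperTriangular := ⟨fun i j h => hU'u i j h, hU'd⟩
  by_contra! hS
  set C := max R 1
  have hC : 1 ≤ C := le_max_right R 1
  have hCφ : C ≤ n.factorial * C ^ n := (le_self_pow₀ hC i₀.pos.ne').trans
    (le_mul_of_one_le_left (by positivity) (mod_cast n.factorial_pos))
  have hSinv := abs_inv_apply_le_of_det_eq_one (det_inv_mul_mul_eq_one hU hU' hΛ hΛ') hC
    fun i j => (hS i j).trans (le_max_left R 1)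
  rw [Fintype.card_fin] at hSinv
  have hsubdiag (i j : Fin n) (hij : (i : ℕ) = j + 1) :
      |Λ i j| ≤ n.factorial * C ^ n ∧ |Λ' i j| ≤ n.factorial * C ^ n := by
    rcases mul_eq_zero.1 (hprod i j hij) with h | h
    · rw [h, abs_zero, ← inv_mul_mul_apply_of_subdiag_of_apply_eq_zero hU hU' hΛ hΛ' hij h]
      exact ⟨by positivity, (hS i j).trans ((le_max_left R 1).trans hCφ)⟩
    · rw [h, abs_zero, ← inv_inv_mul_mul_apply_of_subdiag_of_apply_eq_zero hU hU' hΛ hΛ' hij h]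
      exact ⟨hSinv i j, by positivity⟩
  have hφ : 1 ≤ n.factorial * C ^ n := hC.trans hCφ
  rcases hbig with h | h
  · exact h.not_ge (hΛ.abs_apply_le hφ (fun i j hij => (hsubdiag i j hij).1) i₀ j₀)
  · exact h.not_ge (hΛ'.abs_apply_le hφ (fun i j hij => (hsubdiag i j hij).2) i₀ j₀)

/-- For every `n ≥ 1` there is a function `φ : [0,∞) → [0,∞)` such that: whenever
`Λ, Λ'` are lower-triangular with 1's on the diagonal, all nonzero off-diagonal entries on the
subdiagonal, and `Λ_{j+1,j}·Λ'_{j+1,j} = 0` for all `j`, and `U, U'` are upper-triangular with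
1's on the diagonal, if some entry of `Λ` or `Λ'` exceeds `φ(R)` in absolute value, then some
entry of `S = (UΛ)⁻¹(U'Λ')` exceeds `R` in absolute value. -/
theorem subdiagonal_divergence (n : ℕ) (hn : 1 ≤ n) :
    ∃ φ : ℝ → ℝ, (∀ x : ℝ, 0 ≤ x → 0 ≤ φ x) ∧
      ∀ (Λ Λ' U U' : Matrix (Fin n) (Fin n) ℝ) (R : ℝ), 0 ≤ R →
        (∀ i, Λ i i = 1) → (∀ i, Λ' i i = 1) →
        (∀ i j : Fin n, i ≠ j → (Λ i j ≠ 0 ∨ Λ' i j ≠ 0) → (i : ℕ) = (j : ℕ) + 1) →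
        (∀ i j : Fin n, (i : ℕ) = (j : ℕ) + 1 → Λ i j * Λ' i j = 0) →
        (∀ i, U i i = 1) → (∀ i j : Fin n, j < i → U i j = 0) →
        (∀ i, U' i i = 1) → (∀ i j : Fin n, j < i → U' i j = 0) →
        (∃ i j : Fin n, φ R < |Λ i j| ∨ φ R < |Λ' i j|) →
        ∃ i j : Fin n, R < |((U * Λ)⁻¹ * (U' * Λ')) i j| :=
  subdiagonal_divergence_general n
end

section
/- Let G be a Hausdorff topological group, H a closed subgroup, π : G → G/H the quotient map onto the left coset space, and s : G/H → G a continuous section of π (that is, π ∘ s = id). Let A and B be topological spaces, let α : A → G be a proper continuous map whose range is contained in H, and let β : B → G/H be a proper continuous map. Then the map f : A × B → G defined by f(a,b) = s(β(b)) · α(a) is a proper continuous map. -/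
/-!
The map `g ↦ (π g, s(π g)⁻¹ g)` from `G` to `G/H × G` is continuous and injective, and it sends
`s(β b) · α a` to `(β b, α a)`. So composed with `f` it gives the proper map `β × α` (up to a swap),
and a continuous map whose composite with a continuous injection is proper is itself proper.
-/

namespace QuotientGroup

variable {G : Type*} [Group G] {H : Subgroup G}

def sectionDecomp (s : G ⧸ H → G) (g : G) : (G ⧸ H) × G :=
  ((g : G ⧸ H), (s g)⁻¹ * g)

lemma sectionDecomp_injective (s : G ⧸ H → G) : Function.Injective (sectionDecomp s) := by
  intro g g' hgg'
  obtain ⟨hcoset, hfactor⟩ := Prod.mk.inj hgg'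
  rwa [hcoset, mul_right_inj] at hfactor

lemma sectionDecomp_section_mul {s : G ⧸ H → G} (hs : ∀ q : G ⧸ H, ((s q : G) : G ⧸ H) = q)
    (q : G ⧸ H) {h : G} (hh : h ∈ H) : sectionDecomp s (s q * h) = (q, h) := by
  simp only [sectionDecomp, mk_mul_of_mem _ hh, hs, inv_mul_cancel_left]

lemma continuous_sectionDecomp [TopologicalSpace G] [IsTopologicalGroup G] {s : G ⧸ H → G}
    (hs : Continuous s) : Continuous (sectionDecomp s) :=
  continuous_mk.prodMk ((hs.comp continuous_mk).inv.mul continuous_id)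

end QuotientGroup

theorem proper_section_product_general
    (G : Type*) [Group G] [TopologicalSpace G] [IsTopologicalGroup G]
    (H : Subgroup G)
    (s : G ⧸ H → G) (hs_cont : Continuous s)
    (hs_sect : ∀ q : G ⧸ H, QuotientGroup.mk (s q) = q)
    (A B : Type*) [TopologicalSpace A] [TopologicalSpace B]
    (α : A → G) (hα : IsProperMap α) (hαH : ∀ a, α a ∈ H)
    (β : B → G ⧸ H) (hβ : IsProperMap β) :
    IsProperMap (fun p : A × B => s (β p.2) * α p.1) := by
  have hdecomp : QuotientGroup.sectionDecomp s ∘ (fun p : A × B => s (β p.2) * α p.1)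
      = Prod.swap ∘ Prod.map α β := by
    ext1 p
    exact QuotientGroup.sectionDecomp_section_mul hs_sect _ (hαH p.1)
  refine isProperMap_of_comp_of_inj
    ((hs_cont.comp (hβ.continuous.comp continuous_snd)).mul (hα.continuous.comp continuous_fst))
    (QuotientGroup.continuous_sectionDecomp hs_cont) ?_
    (QuotientGroup.sectionDecomp_injective s)
  rw [hdecomp]
  exact (Homeomorph.prodComm G (G ⧸ H)).isProperMap.comp (hα.prodMap hβ)

/-- Let `G` be a Hausdorff topological group, `H` a closed subgroup, `s : G/H → G` a continuous
section of the quotient map. If `α : A → G` is a proper map with range in `H` and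
`β : B → G/H` is a proper map, then `f(a,b) = s(β b) · α a` is a proper map. -/
theorem proper_section_product
    (G : Type*) [Group G] [TopologicalSpace G] [IsTopologicalGroup G] [T2Space G]
    (H : Subgroup G) (hH : IsClosed (H : Set G))
    (s : G ⧸ H → G) (hs_cont : Continuous s)
    (hs_sect : ∀ q : G ⧸ H, QuotientGroup.mk (s q) = q)
    (A B : Type*) [TopologicalSpace A] [TopologicalSpace B]
    (α : A → G) (hα : IsProperMap α) (hαH : ∀ a, α a ∈ H)
    (β : B → G ⧸ H) (hβ : IsProperMap β) :
    IsProperMap (fun p : A × B => s (β p.2) * α p.1) :=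
  proper_section_product_general G H s hs_cont hs_sect A B α hα hαH β hβ
end

section
/- Fix n ≥ 2 and work in ℝⁿ with standard basis e_1, …, e_n. Let Φ = {e_i − e_j : i ≠ j} (the root system of type A_{n−1}) and let α_m = e_m − e_{m+1} for 1 ≤ m ≤ n−1 be the simple roots. Then for every k with 1 ≤ k ≤ n−1 and every labeling L of {1, …, k} by the two symbols 'U' and 'D' with L(k) = 'D', there exist σ, μ ∈ Φ ∪ {0} such that (1) μ − σ = α_k; (2) for every φ ∈ Φ ∪ {0}, every m ≤ k with L(m) = 'D', and every real c > 0, σ − φ ≠ c·α_m; (3) for every φ ∈ Φ ∪ {0}, every m ≤ k with L(m) = 'U', and every real c > 0, φ − σ ≠ c·α_m. -/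
/-!
Take `l ≤ k` to be the start of the maximal run of `D`-labels ending at `k`, `σ = e_{k+1} - e_l`
and `μ = e_k - e_l`. A root or zero has at most one positive coordinate, and that coordinate is at
most `1`. Unless `m + 1 = l`, the vector `σ - c α_m` is positive at `k + 1` and at `m + 1`, which
coincide only for `m = k`, where the coordinate is `1 + c`. Unless `m = l` or `m = k`, the vector
`σ + c α_m` is positive at the distinct coordinates `k + 1` and `m`. The labels at `l - 1`, `l`
and `k` exclude exactly these exceptions.
-/

theorem Nat.exists_start_of_run {P : ℕ → Prop} {k : ℕ} (hk : P k) :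
    ∃ l ≤ k, (∀ m, l ≤ m → m ≤ k → P m) ∧ ∀ m, m + 1 = l → ¬ P m := by
  induction k with
  | zero => exact ⟨0, le_rfl, fun m _ hm => Nat.le_zero.mp hm ▸ hk, fun m hm => by omega⟩
  | succ k ih =>
    by_cases hPk : P k
    · obtain ⟨l, hlk, hrun, hstart⟩ := ih hPk
      refine ⟨l, by omega, fun m hlm hmk => ?_, hstart⟩
      rcases Nat.lt_or_eq_of_le hmk with hmk | rfl
      exacts [hrun m hlm (by omega), hk]
    · refine ⟨k + 1, le_rfl, fun m hlm hmk => le_antisymm hmk hlm ▸ hk, fun m hm => ?_⟩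
      rwa [Nat.succ_inj.mp hm]

section

variable {ι : Type*} [DecidableEq ι]

theorem single_sub_single_apply_le_one (u v i : ι) :
    (Pi.single u 1 - Pi.single v 1 : ι → ℝ) i ≤ 1 := by
  simp only [Pi.sub_apply, Pi.single_apply]
  split_ifs <;> norm_num

theorem eq_of_pos_single_sub_single_apply {u v i : ι}
    (h : 0 < (Pi.single u 1 - Pi.single v 1 : ι → ℝ) i) : i = u := by
  by_contra hiu
  simp only [Pi.sub_apply, Pi.single_apply, if_neg hiu] at h
  split_ifs at h <;> norm_num at h

theorem single_sub_single_sub_smul_ne {p q s t : ι} (u v : ι) {c : ℝ} (hc : 0 < c)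
    (hpq : p ≠ q) (hps : p ≠ s) (hqt : q ≠ t) (hst : s ≠ t) :
    (Pi.single p 1 - Pi.single q 1) - c • (Pi.single s 1 - Pi.single t 1) ≠
      (Pi.single u 1 - Pi.single v 1 : ι → ℝ) := by
  intro h
  have hp_pos : 0 < (Pi.single u 1 - Pi.single v 1 : ι → ℝ) p := by
    rw [← h]
    simp only [Pi.sub_apply, Pi.smul_apply, Pi.single_apply, smul_eq_mul, if_neg hpq, if_neg hps]
    split_ifs <;> linarith
  have ht_pos : 0 < (Pi.single u 1 - Pi.single v 1 : ι → ℝ) t := by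
    rw [← h]
    simp only [Pi.sub_apply, Pi.smul_apply, Pi.single_apply, smul_eq_mul, if_neg hqt.symm,
      if_neg hst.symm]
    split_ifs <;> linarith
  obtain rfl : p = t :=
    (eq_of_pos_single_sub_single_apply hp_pos).trans (eq_of_pos_single_sub_single_apply ht_pos).symm
  have hp_eq : (Pi.single u 1 - Pi.single v 1 : ι → ℝ) p = 1 + c := by
    rw [← h]
    simp only [Pi.sub_apply, Pi.smul_apply, Pi.single_apply, smul_eq_mul, if_neg hpq, if_neg hps,
      if_true]
    ring
  linarith [single_sub_single_apply_le_one u v p]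

theorem single_sub_single_add_smul_ne {p q s t : ι} (u v : ι) {c : ℝ} (hc : 0 < c)
    (hpq : p ≠ q) (hps : p ≠ s) (hpt : p ≠ t) (hqs : q ≠ s) (hst : s ≠ t) :
    (Pi.single p 1 - Pi.single q 1) + c • (Pi.single s 1 - Pi.single t 1) ≠
      (Pi.single u 1 - Pi.single v 1 : ι → ℝ) := by
  intro h
  have hp_pos : 0 < (Pi.single u 1 - Pi.single v 1 : ι → ℝ) p := by
    rw [← h]
    simp [hpq, hps, hpt]
  have hs_pos : 0 < (Pi.single u 1 - Pi.single v 1 : ι → ℝ) s := by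
    rw [← h]
    simp [hps.symm, hqs.symm, hst, hc]
  exact hps <|
    (eq_of_pos_single_sub_single_apply hp_pos).trans (eq_of_pos_single_sub_single_apply hs_pos).symm

end

/-- The type `A_{n-1}` case of the labeling lemma. In `ℝⁿ` with `Φ = {e_i - e_j : i ≠ j}` and
simple roots `α_m = e_m - e_{m+1}`, for every `k` and every labeling `L` of `{1, …, k}` by
'D'/'U' (`true`/`false`) with `L k = 'D'`, there are `σ, μ ∈ Φ ∪ {0}` with `μ - σ = α_k`,
`σ - φ` never a positive multiple of a D-labeled simple root `α_m` (`m ≤ k`), and `φ - σ`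
never a positive multiple of a U-labeled simple root `α_m` (`m ≤ k`). -/
theorem type_A_labeling_lemma (n : ℕ)
    (e : Fin n → (Fin n → ℝ)) (he : e = fun i => Pi.single i 1)
    (Φ : Set (Fin n → ℝ)) (hΦ : Φ = {v | ∃ i j : Fin n, i ≠ j ∧ v = e i - e j})
    (α : Fin (n - 1) → (Fin n → ℝ))
    (hα : ∀ m : Fin (n - 1),
      α m = e ⟨(m : ℕ), by have := m.isLt; omega⟩ - e ⟨(m : ℕ) + 1, by have := m.isLt; omega⟩) :
    ∀ (k : Fin (n - 1)) (L : Fin (n - 1) → Bool), L k = true →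
      ∃ σ ∈ Φ ∪ {0}, ∃ μ ∈ Φ ∪ {0},
        μ - σ = α k ∧
        (∀ φ ∈ Φ ∪ {0}, ∀ m : Fin (n - 1), m ≤ k → L m = true →
          ∀ c : ℝ, 0 < c → σ - φ ≠ c • α m) ∧
        (∀ φ ∈ Φ ∪ {0}, ∀ m : Fin (n - 1), m ≤ k → L m = false →
          ∀ c : ℝ, 0 < c → φ - σ ≠ c • α m) := by
  intro k L hLk
  subst he hΦ
  simp only at hα
  obtain ⟨l, hlk, hrun, hstart⟩ :=
    Nat.exists_start_of_run (P := fun m => ∀ h : m < n - 1, L ⟨m, h⟩ = true) (k := k)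
      fun _ => hLk
  have hk := k.isLt
  have hφ : ∀ φ ∈ ({v | ∃ i j, i ≠ j ∧ v = Pi.single i 1 - Pi.single j 1} ∪ {0} :
      Set (Fin n → ℝ)), ∃ u v, φ = Pi.single u 1 - Pi.single v 1 := by
    rintro φ (⟨u, v, -, rfl⟩ | rfl)
    exacts [⟨u, v, rfl⟩, ⟨⟨l, by omega⟩, ⟨l, by omega⟩, (sub_self _).symm⟩]
  refine ⟨Pi.single ⟨k + 1, by omega⟩ 1 - Pi.single ⟨l, by omega⟩ 1, ?_,
    Pi.single ⟨k, by omega⟩ 1 - Pi.single ⟨l, by omega⟩ 1, ?_, ?_, ?_, ?_⟩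
  · exact Or.inl ⟨_, _, by simp only [ne_eq, Fin.mk.injEq]; omega, rfl⟩
  · rcases eq_or_ne l k with rfl | hkl
    · exact Or.inr (sub_self _)
    · exact Or.inl ⟨_, _, by simp only [ne_eq, Fin.mk.injEq]; omega, rfl⟩
  · rw [hα k, sub_sub_sub_cancel_right]
  · intro φ hφΦ m hmk hLm c hc h
    obtain ⟨u, v, rfl⟩ := hφ φ hφΦ
    rw [hα m] at h
    have hml : (m : ℕ) + 1 ≠ l := fun hml => hstart m hml fun _ => hLm
    refine single_sub_single_sub_smul_ne u v hc ?_ ?_ ?_ ?_ (by rw [← h, sub_sub_cancel]) <;>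
      simp only [ne_eq, Fin.mk.injEq] <;> omega
  · intro φ hφΦ m hmk hLm c hc h
    obtain ⟨u, v, rfl⟩ := hφ φ hφΦ
    rw [hα m] at h
    have hlm : l ≠ m := fun hlm => by simpa [hLm] using hrun m hlm.le hmk m.isLt
    have hmk' : m ≠ k := by rintro rfl; simp [hLk] at hLm
    refine single_sub_single_add_smul_ne u v hc ?_ ?_ ?_ ?_ ?_ (by rw [← h, add_sub_cancel]) <;>
      simp only [ne_eq, Fin.mk.injEq] <;> omega
end
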